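/- Let k be a field and let P₁, P₂, P₃, P₄, P₅ be five pairwise distinct points of the projective line ℙ¹(k). Then there exists exactly one point P₆ ∈ ℙ¹(k) such that some non-scalar matrix A ∈ GL₂(k) satisfies A·P₁ = P₂, A·P₂ = P₁, A·P₃ = P₄, A·P₄ = P₃, A·P₅ = P₆, and A·P₆ = P₅. -/

import Mathlib

open scoped LinearAlgebra.Projectivization

/-- The action of `GL₂(k)` on the projective line `ℙ¹(k)`: the line spanned by a
nonzero vector `v` is sent to the line spanned by `A.mulVec v`. -/
noncomputable def glAct {k : Type*} [Field k] (A : GL (Fin 2) k)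
    (x : ℙ k (Fin 2 → k)) : ℙ k (Fin 2 → k) :=
  Projectivization.map ((A : Matrix (Fin 2) (Fin 2) k).mulVecLin)
    ((Matrix.GeneralLinearGroup.toLin A).toLinearEquiv.injective) x

namespace GlActAux

open Projectivization

variable {k : Type*} [Field k]

lemma mulVec_ne_zero (A : GL (Fin 2) k) (v : Fin 2 → k) (hv : v ≠ 0) :
    (A : Matrix (Fin 2) (Fin 2) k).mulVec v ≠ 0 := by
  intro h
  apply hv
  have hinj := (Matrix.GeneralLinearGroup.toLin A).toLinearEquiv.injective
  apply hinj
  simpa [Matrix.GeneralLinearGroup.toLin_apply, Matrix.mulVecLin_apply] using h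

lemma glAct_mk (A : GL (Fin 2) k) {v : Fin 2 → k} (hv : v ≠ 0) :
    glAct A (Projectivization.mk k v hv) =
      Projectivization.mk k ((A : Matrix (Fin 2) (Fin 2) k).mulVec v) (mulVec_ne_zero A v hv) := by
  rfl

lemma glAct_glAct (A B : GL (Fin 2) k) (P : ℙ k (Fin 2 → k)) :
    glAct A (glAct B P) = glAct (A * B) P := by
  induction P using Projectivization.ind with
  | h v hv =>
    rw [glAct_mk, glAct_mk, glAct_mk]
    simp only [Units.val_mul, Matrix.mulVec_mulVec]

lemma glAct_one (P : ℙ k (Fin 2 → k)) : glAct (1 : GL (Fin 2) k) P = P := by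
  induction P using Projectivization.ind with
  | h v hv => rw [glAct_mk]; simp only [Units.val_one, Matrix.one_mulVec]

lemma glAct_injective (A : GL (Fin 2) k) : Function.Injective (glAct A) := by
  intro x y h
  have := congrArg (glAct A⁻¹) h
  rwa [glAct_glAct, glAct_glAct, inv_mul_cancel, glAct_one, glAct_one] at this

lemma mk_smul_eq {v : Fin 2 → k} (hv : v ≠ 0) {c : k} (hc : c ≠ 0) :
    Projectivization.mk k (c • v) (smul_ne_zero hc hv) = Projectivization.mk k v hv :=
  (Projectivization.mk_eq_mk_iff k _ _ _ _).2 ⟨Units.mk0 c hc, rfl⟩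

lemma basis_of_ne {Q₁ Q₂ : ℙ k (Fin 2 → k)} (h : Q₁ ≠ Q₂) :
    ∃ b : Module.Basis (Fin 2) k (Fin 2 → k), b 0 = Q₁.rep ∧ b 1 = Q₂.rep := by
  have hli : LinearIndependent k ![Q₁.rep, Q₂.rep] := by
    rw [linearIndependent_fin2]
    refine ⟨by simpa using Q₂.rep_nonzero, ?_⟩
    intro a ha
    simp only [Matrix.cons_val_one, Matrix.head_cons, Matrix.cons_val_zero] at ha
    have ha0 : a ≠ 0 := by
      rintro rfl
      exact Q₁.rep_nonzero (by simpa using ha.symm)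
    apply h
    rw [← Q₁.mk_rep, ← Q₂.mk_rep]
    exact ((Projectivization.mk_eq_mk_iff k _ _ _ _).2 ⟨Units.mk0 a ha0, ha⟩)
  refine ⟨basisOfLinearIndependentOfCardEqFinrank hli
      (by simp [Module.finrank_fintype_fun_eq_card]), ?_, ?_⟩ <;>
    simp [coe_basisOfLinearIndependentOfCardEqFinrank]

lemma coord_eq (b : Module.Basis (Fin 2) k (Fin 2 → k)) {x y x' y' : k}
    (h : x • b 0 + y • b 1 = x' • b 0 + y' • b 1) : x = x' ∧ y = y' := by
  have h0 := congrArg (fun v => b.repr v 0) h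
  have h1 := congrArg (fun v => b.repr v 1) h
  simp [Module.Basis.repr_self, Finsupp.single_apply] at h0 h1
  exact ⟨h0, h1⟩

lemma rep_decomp (b : Module.Basis (Fin 2) k (Fin 2 → k)) (v : Fin 2 → k) :
    v = b.repr v 0 • b 0 + b.repr v 1 • b 1 := by
  have := b.sum_repr v
  rw [Fin.sum_univ_two] at this
  exact this.symm

lemma coord_ne_zero {Q₁ Q₂ Q₃ : ℙ k (Fin 2 → k)} (b : Module.Basis (Fin 2) k (Fin 2 → k))
    (hb0 : b 0 = Q₁.rep) (hb1 : b 1 = Q₂.rep) (h13 : Q₁ ≠ Q₃) (h23 : Q₂ ≠ Q₃) :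
    b.repr Q₃.rep 0 ≠ 0 ∧ b.repr Q₃.rep 1 ≠ 0 := by
  have hd := rep_decomp b Q₃.rep
  constructor
  · intro h0
    rw [h0, zero_smul, zero_add, hb1] at hd
    have hr1 : b.repr Q₃.rep 1 ≠ 0 := by
      intro h1; rw [h1, zero_smul] at hd; exact Q₃.rep_nonzero hd
    apply h23
    rw [← Q₂.mk_rep, ← Q₃.mk_rep]
    exact ((Projectivization.mk_eq_mk_iff k _ _ _ _).2 ⟨Units.mk0 _ hr1, hd.symm⟩).symm
  · intro h1
    rw [h1, zero_smul, add_zero, hb0] at hd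
    have hr0 : b.repr Q₃.rep 0 ≠ 0 := by
      intro h0; rw [h0, zero_smul] at hd; exact Q₃.rep_nonzero hd
    apply h13
    rw [← Q₁.mk_rep, ← Q₃.mk_rep]
    exact ((Projectivization.mk_eq_mk_iff k _ _ _ _).2 ⟨Units.mk0 _ hr0, hd.symm⟩).symm

lemma fix3 (A : GL (Fin 2) k) {Q₁ Q₂ Q₃ : ℙ k (Fin 2 → k)}
    (h12 : Q₁ ≠ Q₂) (h13 : Q₁ ≠ Q₃) (h23 : Q₂ ≠ Q₃)
    (f1 : glAct A Q₁ = Q₁) (f2 : glAct A Q₂ = Q₂) (f3 : glAct A Q₃ = Q₃)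
    (P : ℙ k (Fin 2 → k)) : glAct A P = P := by
  obtain ⟨b, hb0, hb1⟩ := basis_of_ne h12
  set M : Matrix (Fin 2) (Fin 2) k := (A : Matrix (Fin 2) (Fin 2) k) with hM
  have key : ∀ Q : ℙ k (Fin 2 → k), glAct A Q = Q →
      ∃ a : k, a ≠ 0 ∧ M.mulVec Q.rep = a • Q.rep := by
    intro Q hQ
    conv_lhs at hQ => rw [← Q.mk_rep]
    rw [glAct_mk] at hQ
    conv_rhs at hQ => rw [← Q.mk_rep]
    rw [Projectivization.mk_eq_mk_iff] at hQ
    obtain ⟨a, ha⟩ := hQ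
    exact ⟨(a : k), a.ne_zero, by rw [← ha]; simp [Units.smul_def]⟩
  obtain ⟨α, hα0, hα⟩ := key Q₁ f1
  obtain ⟨β, hβ0, hβ⟩ := key Q₂ f2
  obtain ⟨γ, hγ0, hγ⟩ := key Q₃ f3
  obtain ⟨hr0, hr1⟩ := coord_ne_zero b hb0 hb1 h13 h23
  set r0 := b.repr Q₃.rep 0 with hr0def
  set r1 := b.repr Q₃.rep 1 with hr1def
  have hd : Q₃.rep = r0 • Q₁.rep + r1 • Q₂.rep := by
    rw [← hb0, ← hb1]; exact rep_decomp b Q₃.rep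
  have hMd : (r0 * α) • b 0 + (r1 * β) • b 1 = (γ * r0) • b 0 + (γ * r1) • b 1 := by
    rw [hb0, hb1]
    have l : M.mulVec Q₃.rep = (r0 * α) • Q₁.rep + (r1 * β) • Q₂.rep := by
      conv_lhs => rw [hd]
      rw [Matrix.mulVec_add, Matrix.mulVec_smul, Matrix.mulVec_smul, hα, hβ,
        smul_smul, smul_smul]
    have r : M.mulVec Q₃.rep = (γ * r0) • Q₁.rep + (γ * r1) • Q₂.rep := by
      rw [hγ, hd, smul_add, smul_smul, smul_smul]
    rw [← l, r]
  obtain ⟨e0, e1⟩ := coord_eq b hMd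
  have hαγ : α = γ := mul_left_cancel₀ hr0 (by rw [e0, mul_comm])
  have hβγ : β = γ := mul_left_cancel₀ hr1 (by rw [e1, mul_comm])
  have hall : ∀ v : Fin 2 → k, M.mulVec v = γ • v := by
    intro v
    conv_lhs => rw [rep_decomp b v]
    conv_rhs => rw [rep_decomp b v]
    rw [Matrix.mulVec_add, Matrix.mulVec_smul, Matrix.mulVec_smul, hb0, hb1, hα, hβ,
      hαγ, hβγ, smul_add, smul_smul, smul_smul, smul_smul, smul_smul,
      mul_comm γ (b.repr v 0), mul_comm γ (b.repr v 1)]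
  conv_lhs => rw [← P.mk_rep]
  rw [glAct_mk]
  conv_rhs => rw [← P.mk_rep]
  refine (Projectivization.mk_eq_mk_iff k _ _ _ _).2 ⟨Units.mk0 γ hγ0, ?_⟩
  simp only [Units.smul_def, Units.val_mk0]; exact (hall _).symm

end GlActAux

/-- given five pairwise distinct points `P₁, …, P₅` of `ℙ¹(k)`,
there is exactly one point `P₆ ∈ ℙ¹(k)` such that some non-scalar `A ∈ GL₂(k)`
exchanges `P₁` with `P₂`, `P₃` with `P₄`, and `P₅` with `P₆`. -/
theorem existsUnique_sixth_point_of_involution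
    (k : Type*) [Field k] (P₁ P₂ P₃ P₄ P₅ : ℙ k (Fin 2 → k))
    (h12 : P₁ ≠ P₂) (h13 : P₁ ≠ P₃) (h14 : P₁ ≠ P₄) (h15 : P₁ ≠ P₅)
    (h23 : P₂ ≠ P₃) (h24 : P₂ ≠ P₄) (h25 : P₂ ≠ P₅)
    (h34 : P₃ ≠ P₄) (h35 : P₃ ≠ P₅) (h45 : P₄ ≠ P₅) :
    ∃! P₆ : ℙ k (Fin 2 → k), ∃ A : GL (Fin 2) k,
      (¬∃ c : k, (A : Matrix (Fin 2) (Fin 2) k) = c • (1 : Matrix (Fin 2) (Fin 2) k)) ∧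
      glAct A P₁ = P₂ ∧ glAct A P₂ = P₁ ∧ glAct A P₃ = P₄ ∧ glAct A P₄ = P₃ ∧
      glAct A P₅ = P₆ ∧ glAct A P₆ = P₅ := by
  classical
  open GlActAux Projectivization in
  obtain ⟨b, hb0, hb1⟩ := GlActAux.basis_of_ne h12
  obtain ⟨hr0, hr1⟩ := GlActAux.coord_ne_zero b hb0 hb1 h13 h23
  obtain ⟨hs0, hs1⟩ := GlActAux.coord_ne_zero b hb0 hb1 h14 h24
  set r0 := b.repr P₃.rep 0 with hr0def
  set r1 := b.repr P₃.rep 1 with hr1def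
  set s0 := b.repr P₄.rep 0 with hs0def
  set s1 := b.repr P₄.rep 1 with hs1def
  have hrs0 : r0 * s0 ≠ 0 := mul_ne_zero hr0 hs0
  have hrs1 : r1 * s1 ≠ 0 := mul_ne_zero hr1 hs1
  set f : (Fin 2 → k) →ₗ[k] (Fin 2 → k) :=
    b.constr k ![(r1 * s1) • b 1, (r0 * s0) • b 0] with hf
  set g : (Fin 2 → k) →ₗ[k] (Fin 2 → k) :=
    b.constr k ![(r0 * s0)⁻¹ • b 1, (r1 * s1)⁻¹ • b 0] with hg
  have hfb0 : f (b 0) = (r1 * s1) • b 1 := by rw [hf, Module.Basis.constr_basis]; simp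
  have hfb1 : f (b 1) = (r0 * s0) • b 0 := by rw [hf, Module.Basis.constr_basis]; simp
  have hgb0 : g (b 0) = (r0 * s0)⁻¹ • b 1 := by rw [hg, Module.Basis.constr_basis]; simp
  have hgb1 : g (b 1) = (r1 * s1)⁻¹ • b 0 := by rw [hg, Module.Basis.constr_basis]; simp
  have hfg : f ∘ₗ g = LinearMap.id := by
    apply b.ext; intro i
    fin_cases i
    · simp only [LinearMap.comp_apply, LinearMap.id_apply, Fin.zero_eta, hgb0, map_smul, hfb1,
        smul_smul, inv_mul_cancel₀ hrs0, one_smul]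
    · simp only [LinearMap.comp_apply, LinearMap.id_apply, Fin.mk_one, hgb1, map_smul, hfb0,
        smul_smul, inv_mul_cancel₀ hrs1, one_smul]
  have hgf : g ∘ₗ f = LinearMap.id := by
    apply b.ext; intro i
    fin_cases i
    · simp only [LinearMap.comp_apply, LinearMap.id_apply, Fin.zero_eta, hfb0, map_smul, hgb1,
        smul_smul, mul_inv_cancel₀ hrs1, one_smul]
    · simp only [LinearMap.comp_apply, LinearMap.id_apply, Fin.mk_one, hfb1, map_smul, hgb0,
        smul_smul, mul_inv_cancel₀ hrs0, one_smul]
  set e : (Fin 2 → k) ≃ₗ[k] (Fin 2 → k) := LinearEquiv.ofLinear f g hfg hgf with he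
  set A : GL (Fin 2) k :=
    Matrix.GeneralLinearGroup.toLin.symm (LinearMap.GeneralLinearGroup.ofLinearEquiv e) with hAdef
  have hA : ∀ v, (A : Matrix (Fin 2) (Fin 2) k).mulVec v = f v := by
    intro v
    rw [← Matrix.mulVecLin_apply, ← Matrix.GeneralLinearGroup.coe_toLin]
    show ((Matrix.GeneralLinearGroup.toLin A : _) : (Fin 2 → k) →ₗ[k] (Fin 2 → k)) v = f v
    rw [hAdef, MulEquiv.apply_symm_apply]
    rfl
  have hP3 : P₃.rep = r0 • b 0 + r1 • b 1 := GlActAux.rep_decomp b P₃.rep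
  have hP4 : P₄.rep = s0 • b 0 + s1 • b 1 := GlActAux.rep_decomp b P₄.rep
  have act1 : glAct A P₁ = P₂ := by
    conv_lhs => rw [← P₁.mk_rep]
    rw [GlActAux.glAct_mk]
    conv_rhs => rw [← P₂.mk_rep]
    refine (Projectivization.mk_eq_mk_iff k _ _ _ _).2 ⟨Units.mk0 (r1 * s1) hrs1, ?_⟩
    rw [Units.smul_def, hA, ← hb0, ← hb1, hfb0]
    rfl
  have act2 : glAct A P₂ = P₁ := by
    conv_lhs => rw [← P₂.mk_rep]
    rw [GlActAux.glAct_mk]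
    conv_rhs => rw [← P₁.mk_rep]
    refine (Projectivization.mk_eq_mk_iff k _ _ _ _).2 ⟨Units.mk0 (r0 * s0) hrs0, ?_⟩
    rw [Units.smul_def, hA, ← hb0, ← hb1, hfb1]
    rfl
  have act3 : glAct A P₃ = P₄ := by
    conv_lhs => rw [← P₃.mk_rep]
    rw [GlActAux.glAct_mk]
    conv_rhs => rw [← P₄.mk_rep]
    refine (Projectivization.mk_eq_mk_iff k _ _ _ _).2
      ⟨Units.mk0 (r0 * r1) (mul_ne_zero hr0 hr1), ?_⟩
    rw [Units.smul_def, hA, hP3, map_add, map_smul, map_smul, hfb0, hfb1, hP4]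
    simp only [Units.val_mk0]
    module
  have act4 : glAct A P₄ = P₃ := by
    conv_lhs => rw [← P₄.mk_rep]
    rw [GlActAux.glAct_mk]
    conv_rhs => rw [← P₃.mk_rep]
    refine (Projectivization.mk_eq_mk_iff k _ _ _ _).2
      ⟨Units.mk0 (s0 * s1) (mul_ne_zero hs0 hs1), ?_⟩
    rw [Units.smul_def, hA, hP4, map_add, map_smul, map_smul, hfb0, hfb1, hP3]
    simp only [Units.val_mk0]
    module
  have hsq : ∀ P, glAct (A * A) P = P := by
    refine GlActAux.fix3 (A * A) h12 h13 h23 ?_ ?_ ?_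
    · rw [← GlActAux.glAct_glAct, act1, act2]
    · rw [← GlActAux.glAct_glAct, act2, act1]
    · rw [← GlActAux.glAct_glAct, act3, act4]
  refine ⟨glAct A P₅, ⟨A, ?_, act1, act2, act3, act4, rfl, ?_⟩, ?_⟩
  · rintro ⟨c, hc⟩
    have h1 : (A : Matrix (Fin 2) (Fin 2) k).mulVec (b 0) = c • b 0 := by
      rw [hc, Matrix.smul_mulVec, Matrix.one_mulVec]
    rw [hA, hfb0] at h1
    have h2 : (0 : k) • b 0 + (r1 * s1) • b 1 = c • b 0 + (0 : k) • b 1 := by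
      rw [zero_smul, zero_smul, zero_add, add_zero, h1]
    exact hrs1 (GlActAux.coord_eq b h2).2
  · rw [GlActAux.glAct_glAct]
    exact hsq P₅
  · rintro P₆' ⟨A', -, g1, g2, g3, g4, g5, g6⟩
    have hfix := GlActAux.fix3 (A' * A) h12 h13 h23
      (by rw [← GlActAux.glAct_glAct, act1, g2])
      (by rw [← GlActAux.glAct_glAct, act2, g1])
      (by rw [← GlActAux.glAct_glAct, act3, g4])
    have h5 : glAct A' (glAct A P₅) = P₅ := by
      rw [GlActAux.glAct_glAct]; exact hfix P₅
    exact GlActAux.glAct_injective A' (g6.trans h5.symm)
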